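/- Average conditional min-entropy can only decrease by the bit-length of additional conditioning: for random variables X, Y, Z over finite sets where Z takes at most 2^λ values, H̃_∞(X | (Y,Z)) ≥ H̃_∞(X | Y) - λ, where H̃_∞(X|Y) = -log₂ E_{y←Y}[max_x Pr[X=x | Y=y]]. -/
import Mathlib


open Finset Real

theorem stmt_11 {A B C : Type*} [Fintype A] [Fintype B] [Fintype C] [Nonempty A]
    (lam : ℕ) (hC : Fintype.card C ≤ 2 ^ lam)
    (p : A × B × C → ℝ) (hp0 : ∀ w, 0 ≤ p w) (hp1 : ∑ w, p w = 1) :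
    -Real.logb 2 (∑ yz : B × C, ⨆ x : A, p (x, yz.1, yz.2))
      ≥ -Real.logb 2 (∑ y : B, ⨆ x : A, ∑ z : C, p (x, y, z)) - lam := by
  set L := ∑ yz : B × C, ⨆ x : A, p (x, yz.1, yz.2) with hLdef
  set S := ∑ y : B, ⨆ x : A, ∑ z : C, p (x, y, z) with hSdef
  obtain ⟨x0⟩ := ‹Nonempty A›
  have hsupK : ∀ y, 0 ≤ ⨆ x : A, ∑ z : C, p (x, y, z) := fun y =>
    le_ciSup_of_le (Set.Finite.bddAbove (Set.finite_range _)) x0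
      (Finset.sum_nonneg fun z _ => hp0 _)
  have hle : ∀ y z, (⨆ x : A, p (x, y, z)) ≤ ⨆ x : A, ∑ z : C, p (x, y, z) := by
    intro y z
    refine ciSup_le fun x => ?_
    refine le_trans ?_ (le_ciSup (Set.Finite.bddAbove (Set.finite_range _)) x)
    exact Finset.single_le_sum (f := fun z => p (x, y, z)) (fun z _ => hp0 _) (Finset.mem_univ z)
  have hkey : L ≤ 2 ^ lam * S := by
    rw [hLdef, hSdef, Fintype.sum_prod_type, Finset.mul_sum]
    refine Finset.sum_le_sum fun y _ => ?_
    calc ∑ z : C, ⨆ x : A, p (x, y, z)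
        ≤ ∑ _z : C, ⨆ x : A, ∑ z' : C, p (x, y, z') :=
          Finset.sum_le_sum fun z _ => hle y z
      _ = (Fintype.card C : ℝ) * ⨆ x : A, ∑ z : C, p (x, y, z) := by
          rw [Finset.sum_const, nsmul_eq_mul, Finset.card_univ]
      _ ≤ 2 ^ lam * ⨆ x : A, ∑ z : C, p (x, y, z) := by
          apply mul_le_mul_of_nonneg_right _ (hsupK y)
          exact_mod_cast hC
  have hL : 0 < L := by
    have h1 : (1 : ℝ) ≤ (Fintype.card A : ℝ) * L := by
      rw [← hp1, Fintype.sum_prod_type]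
      calc ∑ x : A, ∑ yz : B × C, p (x, yz.1, yz.2)
          ≤ ∑ _x : A, L := Finset.sum_le_sum fun x _ => Finset.sum_le_sum
            fun yz _ => le_ciSup (f := fun x => p (x, yz.1, yz.2)) (Set.Finite.bddAbove (Set.finite_range _)) x
        _ = (Fintype.card A : ℝ) * L := by
            rw [Finset.sum_const, nsmul_eq_mul, Finset.card_univ]
    by_contra h
    push_neg at h
    have : (Fintype.card A : ℝ) * L ≤ 0 :=
      mul_nonpos_of_nonneg_of_nonpos (Nat.cast_nonneg _) h
    linarith
  have hS : 0 < S := by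
    have h2 : (0:ℝ) < 2 ^ lam := by positivity
    nlinarith
  have hlog : Real.logb 2 L ≤ lam + Real.logb 2 S := by
    have h1 : Real.logb 2 L ≤ Real.logb 2 (2 ^ lam * S) :=
      Real.logb_le_logb_of_le one_lt_two hL hkey
    have h2 : Real.logb 2 ((2:ℝ) ^ lam * S) = lam + Real.logb 2 S := by
      rw [Real.logb_mul (by positivity) (ne_of_gt hS), Real.logb_pow,
        Real.logb_self_eq_one one_lt_two]
      ring
    linarith
  linarith
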